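/- arXiv:1501.05744 — 8 statements merged into one kernel-verified Lean document; each statement's English description precedes it below -/
import Mathlib

section
/- Theorem 2, (1) ⇒ (2): if Π ∈ 𝓜ᵐᵐ is an optimal measurement (f(Π) ≥ f(Π') for every Π' ∈ 𝓜ᵐᵐ) and moreover the dual optimum is attained at some dual feasible pair whose value equals f(Π), then there exist a Hermitian matrix X and λ : Fin J → ℝ with λ j ≥ 0 such that: X - z m λ is positive semidefinite for all m ∈ Fin M; (X - z m λ) * Π m = 0 for all m ∈ Fin M; and λ j * (b j - ∑ m, Re(Tr(a j m * Π m))) = 0 for all j ∈ Fin J. -/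
open Matrix Complex
open scoped ComplexOrder

noncomputable section

/-- A POVM with `M` outcomes: each detection operator is positive semidefinite
and they sum to the identity. -/
def IsPOVM {n : Type*} [Fintype n] [DecidableEq n] {M : ℕ}
    (P : Fin M → Matrix n n ℂ) : Prop :=
  (∀ m, (P m).PosSemidef) ∧ ∑ m, P m = 1

/-- Membership in the feasible set `𝓜ᵐᵐ`. -/
def Feasible {n : Type*} [Fintype n] [DecidableEq n] {M J : ℕ}
    (a : Fin J → Fin M → Matrix n n ℂ) (b : Fin J → ℝ)
    (P : Fin M → Matrix n n ℂ) : Prop :=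
  IsPOVM P ∧ ∀ j, ∑ m, ((a j m * P m).trace).re ≤ b j

/-- The primal objective `f(Π)`. -/
def primalObj {n : Type*} [Fintype n] {M : ℕ}
    (c : Fin M → Matrix n n ℂ) (P : Fin M → Matrix n n ℂ) : ℝ :=
  ∑ m, ((c m * P m).trace).re

/-- The operator `z m λ = c m - ∑ j, λ j • a j m`. -/
def zOp {M J : ℕ} {n : Type*}
    (c : Fin M → Matrix n n ℂ) (a : Fin J → Fin M → Matrix n n ℂ)
    (lam : Fin J → ℝ) (m : Fin M) : Matrix n n ℂ :=
  c m - ∑ j, (lam j : ℂ) • a j m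

/-- The dual objective `s(X, λ)`. -/
def dualObj {n : Type*} [Fintype n] {J : ℕ}
    (b : Fin J → ℝ) (X : Matrix n n ℂ) (lam : Fin J → ℝ) : ℝ :=
  X.trace.re + ∑ j, lam j * b j

/-- Dual feasibility: `X` Hermitian, `λ ≥ 0`, and `X - z m λ` positive semidefinite. -/
def DualFeasible {n : Type*} [Fintype n] {M J : ℕ}
    (c : Fin M → Matrix n n ℂ) (a : Fin J → Fin M → Matrix n n ℂ)
    (X : Matrix n n ℂ) (lam : Fin J → ℝ) : Prop :=
  X.IsHermitian ∧ (∀ j, 0 ≤ lam j) ∧ ∀ m, (X - zOp c a lam m).PosSemidef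

/-! The dual pair `(X, λ)` attaining the optimum already satisfies the slackness conditions.
Since `∑ m, Π m = 1`, the duality gap `s(X, λ) - f(Π)` splits as
`∑ m, Re Tr((X - z m λ) Π m) + ∑ j, λ j (b j - ∑ m, Re Tr(a j m Π m))`,
a sum of nonnegative terms, so a zero gap forces each of them to vanish.
For positive semidefinite `A = Sᴴ S` and `B = T Tᴴ` we have `Tr(A B) = Tr((S T)ᴴ (S T))`,
which is nonnegative and vanishes only if `S T = 0`, i.e. only if `A B = Sᴴ (S T) Tᴴ = 0`. -/

namespace Matrix

variable {𝕜 n : Type*} [RCLike 𝕜] [Fintype n]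

lemma trace_conjTranspose_mul_self_mul_mul_conjTranspose (S T : Matrix n n 𝕜) :
    (Sᴴ * S * (T * Tᴴ)).trace = ((S * T)ᴴ * (S * T)).trace := by
  rw [conjTranspose_mul, ← Matrix.mul_assoc, trace_mul_comm]
  simp only [Matrix.mul_assoc]

open scoped MatrixOrder in
lemma PosSemidef.exists_eq_conjTranspose_mul_self {A : Matrix n n 𝕜} (hA : A.PosSemidef) :
    ∃ S : Matrix n n 𝕜, A = Sᴴ * S := by
  classical
  obtain ⟨S, rfl⟩ := CStarAlgebra.nonneg_iff_eq_star_mul_self.mp hA.nonneg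
  exact ⟨S, rfl⟩

lemma PosSemidef.exists_eq_mul_conjTranspose_self {A : Matrix n n 𝕜} (hA : A.PosSemidef) :
    ∃ T : Matrix n n 𝕜, A = T * Tᴴ := by
  obtain ⟨S, hS⟩ := hA.exists_eq_conjTranspose_mul_self
  exact ⟨Sᴴ, by rw [conjTranspose_conjTranspose, hS]⟩

variable {A B : Matrix n n 𝕜}

lemma PosSemidef.trace_mul_nonneg (hA : A.PosSemidef) (hB : B.PosSemidef) :
    0 ≤ (A * B).trace := by
  obtain ⟨S, rfl⟩ := hA.exists_eq_conjTranspose_mul_self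
  obtain ⟨T, rfl⟩ := hB.exists_eq_mul_conjTranspose_self
  rw [trace_conjTranspose_mul_self_mul_mul_conjTranspose]
  exact (posSemidef_conjTranspose_mul_self _).trace_nonneg

lemma PosSemidef.trace_mul_eq_zero_iff (hA : A.PosSemidef) (hB : B.PosSemidef) :
    (A * B).trace = 0 ↔ A * B = 0 := by
  refine ⟨fun h ↦ ?_, fun h ↦ h ▸ trace_zero n 𝕜⟩
  obtain ⟨S, rfl⟩ := hA.exists_eq_conjTranspose_mul_self
  obtain ⟨T, rfl⟩ := hB.exists_eq_mul_conjTranspose_self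
  rw [trace_conjTranspose_mul_self_mul_mul_conjTranspose,
    trace_conjTranspose_mul_self_eq_zero_iff] at h
  calc Sᴴ * S * (T * Tᴴ) = Sᴴ * (S * T) * Tᴴ := by simp only [Matrix.mul_assoc]
    _ = 0 := by rw [h, Matrix.mul_zero, Matrix.zero_mul]

lemma PosSemidef.re_trace_mul_nonneg (hA : A.PosSemidef) (hB : B.PosSemidef) :
    0 ≤ RCLike.re (A * B).trace :=
  (RCLike.nonneg_iff.mp (hA.trace_mul_nonneg hB)).1

lemma PosSemidef.re_trace_mul_eq_zero_iff (hA : A.PosSemidef) (hB : B.PosSemidef) :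
    RCLike.re (A * B).trace = 0 ↔ A * B = 0 := by
  have him := (RCLike.nonneg_iff.mp (hA.trace_mul_nonneg hB)).2
  rw [← hA.trace_mul_eq_zero_iff hB]
  exact ⟨fun h ↦ RCLike.ext (by simpa) (by simpa), fun h ↦ by simp [h]⟩

end Matrix

section DualityGap

variable {n : Type*} [Fintype n] {M J : ℕ} (c : Fin M → Matrix n n ℂ)
  (a : Fin J → Fin M → Matrix n n ℂ) (b : Fin J → ℝ) (X : Matrix n n ℂ) (lam : Fin J → ℝ)

lemma re_trace_sub_zOp_mul (m : Fin M) (Q : Matrix n n ℂ) :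
    ((X - zOp c a lam m) * Q).trace.re
      = (X * Q).trace.re - (c m * Q).trace.re + ∑ j, lam j * (a j m * Q).trace.re := by
  simp only [zOp, sub_sub_eq_add_sub, Matrix.sub_mul, Matrix.add_mul, Finset.sum_mul,
    smul_mul_assoc, trace_sub, trace_add, trace_sum, trace_smul, sub_re, add_re, re_sum,
    smul_eq_mul, re_ofReal_mul]
  ring

lemma dualObj_sub_primalObj [DecidableEq n] {P : Fin M → Matrix n n ℂ} (hP : ∑ m, P m = 1) :
    dualObj b X lam - primalObj c P
      = ∑ m, ((X - zOp c a lam m) * P m).trace.re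
        + ∑ j, lam j * (b j - ∑ m, (a j m * P m).trace.re) := by
  have hX : ∑ m, (X * P m).trace.re = X.trace.re := by
    rw [← re_sum, ← trace_sum, ← Finset.mul_sum, hP, Matrix.mul_one]
  simp only [re_trace_sub_zOp_mul, Finset.sum_add_distrib, Finset.sum_sub_distrib, hX, mul_sub,
    Finset.mul_sum, dualObj, primalObj]
  rw [Finset.sum_comm]
  ring

end DualityGap
theorem optimal_implies_slackness_general {n : Type*} [Fintype n] [DecidableEq n]
    {M J : ℕ}
    (c : Fin M → Matrix n n ℂ) (a : Fin J → Fin M → Matrix n n ℂ) (b : Fin J → ℝ)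
    (P : Fin M → Matrix n n ℂ) (hP : Feasible a b P)
    (hdualatt : ∃ X lam, DualFeasible c a X lam ∧ dualObj b X lam = primalObj c P) :
    ∃ (X : Matrix n n ℂ) (lam : Fin J → ℝ),
      X.IsHermitian ∧ (∀ j, 0 ≤ lam j) ∧
      (∀ m, (X - zOp c a lam m).PosSemidef) ∧
      (∀ m, (X - zOp c a lam m) * P m = 0) ∧
      (∀ j, lam j * (b j - ∑ m, ((a j m * P m).trace).re) = 0) := by
  obtain ⟨X, lam, ⟨hX, hlam, hslack⟩, hval⟩ := hdualatt
  obtain ⟨⟨hPpsd, hPsum⟩, hPfeas⟩ := hP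
  have hslack_nonneg : ∀ m ∈ Finset.univ, 0 ≤ ((X - zOp c a lam m) * P m).trace.re :=
    fun m _ ↦ (hslack m).re_trace_mul_nonneg (hPpsd m)
  have hlam_slack_nonneg :
      ∀ j ∈ Finset.univ, 0 ≤ lam j * (b j - ∑ m, ((a j m * P m).trace).re) :=
    fun j _ ↦ mul_nonneg (hlam j) (sub_nonneg.mpr (hPfeas j))
  have hvanish := dualObj_sub_primalObj c a b X lam hPsum
  rw [hval, sub_self, eq_comm, add_eq_zero_iff_of_nonneg (Finset.sum_nonneg hslack_nonneg)
    (Finset.sum_nonneg hlam_slack_nonneg), Finset.sum_eq_zero_iff_of_nonneg hslack_nonneg,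
    Finset.sum_eq_zero_iff_of_nonneg hlam_slack_nonneg] at hvanish
  refine ⟨X, lam, hX, hlam, hslack, fun m ↦ ?_, fun j ↦ hvanish.2 j (Finset.mem_univ j)⟩
  exact ((hslack m).re_trace_mul_eq_zero_iff (hPpsd m)).mp (hvanish.1 m (Finset.mem_univ m))

/-- Theorem 2, (1) ⇒ (2): an optimal measurement, together with attainment of the dual
optimum at the primal optimal value, yields a dual feasible pair satisfying the
complementary slackness conditions. -/
theorem optimal_implies_slackness {n : Type*} [Fintype n] [DecidableEq n] [Nonempty n]
    {M J : ℕ}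
    (c : Fin M → Matrix n n ℂ) (a : Fin J → Fin M → Matrix n n ℂ) (b : Fin J → ℝ)
    (hc : ∀ m, (c m).IsHermitian) (ha : ∀ j m, (a j m).IsHermitian)
    (P : Fin M → Matrix n n ℂ) (hP : Feasible a b P)
    (hopt : ∀ P', Feasible a b P' → primalObj c P' ≤ primalObj c P)
    (hdualatt : ∃ X lam, DualFeasible c a X lam ∧ dualObj b X lam = primalObj c P) :
    ∃ (X : Matrix n n ℂ) (lam : Fin J → ℝ),
      X.IsHermitian ∧ (∀ j, 0 ≤ lam j) ∧
      (∀ m, (X - zOp c a lam m).PosSemidef) ∧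
      (∀ m, (X - zOp c a lam m) * P m = 0) ∧
      (∀ j, lam j * (b j - ∑ m, ((a j m * P m).trace).re) = 0) :=
  optimal_implies_slackness_general c a b P hP hdualatt
end
end

section
/- Theorem 2, (2) ⇒ (3): let Π ∈ 𝓜ᵐᵐ, and suppose there exist a Hermitian matrix X and λ : Fin J → ℝ with λ j ≥ 0 such that X - z m λ is positive semidefinite for all m, (X - z m λ) * Π m = 0 for all m, and λ j * (b j - ∑ m, Re(Tr(a j m * Π m))) = 0 for all j. Then for the same λ: (∑_{n'<M} z n' λ * Π n') - z m λ is positive semidefinite for all m ∈ Fin M, and λ j * (b j - ∑ m, Re(Tr(a j m * Π m))) = 0 for all j ∈ Fin J. -/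
open Matrix Complex
open scoped ComplexOrder

noncomputable section

theorem Finset.sum_mul_eq_of_sub_mul_eq_zero {R ι : Type*} [NonAssocRing R] {s : Finset ι}
    {x : R} {z p : ι → R} (horth : ∀ i ∈ s, (x - z i) * p i = 0) (hp : ∑ i ∈ s, p i = 1) :
    ∑ i ∈ s, z i * p i = x := by
  calc ∑ i ∈ s, z i * p i = ∑ i ∈ s, x * p i :=
        Finset.sum_congr rfl fun i hi => by rw [eq_comm, ← sub_eq_zero, ← sub_mul, horth i hi]
    _ = x := by rw [← Finset.mul_sum, hp, mul_one]

theorem slackness_implies_X_form_general {n : Type*} [Fintype n] [DecidableEq n]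
    {M J : ℕ}
    (c : Fin M → Matrix n n ℂ) (a : Fin J → Fin M → Matrix n n ℂ) (b : Fin J → ℝ)
    (P : Fin M → Matrix n n ℂ) (hP : Feasible a b P)
    (X : Matrix n n ℂ) (lam : Fin J → ℝ)
    (hpsd : ∀ m, (X - zOp c a lam m).PosSemidef)
    (horth : ∀ m, (X - zOp c a lam m) * P m = 0)
    (hslack : ∀ j, lam j * (b j - ∑ m, ((a j m * P m).trace).re) = 0) :
    (∀ m, ((∑ n', zOp c a lam n' * P n') - zOp c a lam m).PosSemidef) ∧
    (∀ j, lam j * (b j - ∑ m, ((a j m * P m).trace).re) = 0) := by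
  have hX : ∑ m, zOp c a lam m * P m = X :=
    Finset.sum_mul_eq_of_sub_mul_eq_zero (fun m _ => horth m) hP.1.2
  exact ⟨fun m => hX ▸ hpsd m, hslack⟩

/-- Theorem 2, (2) ⇒ (3). -/
theorem slackness_implies_X_form {n : Type*} [Fintype n] [DecidableEq n] [Nonempty n]
    {M J : ℕ}
    (c : Fin M → Matrix n n ℂ) (a : Fin J → Fin M → Matrix n n ℂ) (b : Fin J → ℝ)
    (hc : ∀ m, (c m).IsHermitian) (ha : ∀ j m, (a j m).IsHermitian)
    (P : Fin M → Matrix n n ℂ) (hP : Feasible a b P)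
    (X : Matrix n n ℂ) (lam : Fin J → ℝ)
    (hX : X.IsHermitian) (hlam : ∀ j, 0 ≤ lam j)
    (hpsd : ∀ m, (X - zOp c a lam m).PosSemidef)
    (horth : ∀ m, (X - zOp c a lam m) * P m = 0)
    (hslack : ∀ j, lam j * (b j - ∑ m, ((a j m * P m).trace).re) = 0) :
    (∀ m, ((∑ n', zOp c a lam n' * P n') - zOp c a lam m).PosSemidef) ∧
    (∀ j, lam j * (b j - ∑ m, ((a j m * P m).trace).re) = 0) :=
  slackness_implies_X_form_general c a b P hP X lam hpsd horth hslack
end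
end

section
/- Theorem 2, (3) ⇒ (1): let Π ∈ 𝓜ᵐᵐ and suppose there exists λ : Fin J → ℝ with λ j ≥ 0 such that (∑_{n'<M} z n' λ * Π n') - z m λ is positive semidefinite for all m ∈ Fin M and λ j * (b j - ∑ m, Re(Tr(a j m * Π m))) = 0 for all j ∈ Fin J. Then Π is an optimal measurement, i.e. f(Π) ≥ f(Π') for every Π' ∈ 𝓜ᵐᵐ. -/
open Matrix Complex
open scoped ComplexOrder

noncomputable section

/-! Weak duality: for every `X` with `X - z m λ ⪰ 0` and `λ ≥ 0`, the Lagrangian bound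
`f(Π') ≤ Tr X + ∑ λ_j b_j` holds on all of `𝓜ᵐᵐ`, because `Tr X = ∑ Tr(X Π'_m)` for a POVM and
each `Tr((X - z m λ) Π'_m) ≥ 0`. For `X = ∑ z m λ Π_m`, complementary slackness makes this dual
value equal to `f(Π)`. -/

lemma Matrix.PosSemidef.trace_mul_nonneg_s4 {𝕜 : Type*} [RCLike 𝕜] {n : Type*} [Fintype n]
    [DecidableEq n] {A B : Matrix n n 𝕜} (hA : A.PosSemidef) (hB : B.PosSemidef) :
    0 ≤ (A * B).trace := by
  obtain ⟨Q, rfl⟩ : ∃ Q : Matrix n n 𝕜, B = Qᴴ * Q := by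
    open scoped MatrixOrder Matrix.Norms.L2Operator in
    exact CStarAlgebra.nonneg_iff_eq_star_mul_self.mp hB.nonneg
  rw [← mul_assoc, trace_mul_comm, ← mul_assoc]
  exact (hA.mul_mul_conjTranspose_same Q).trace_nonneg

section

variable {n : Type*} [Fintype n] [DecidableEq n] {M J : ℕ}

lemma IsPOVM.sum_re_trace_mul_le {Q Z : Fin M → Matrix n n ℂ} (hQ : IsPOVM Q)
    {X : Matrix n n ℂ} (hX : ∀ m, (X - Z m).PosSemidef) :
    ∑ m, (Z m * Q m).trace.re ≤ X.trace.re := by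
  have hX_split : X.trace = ∑ m, (X * Q m).trace := by
    rw [← trace_sum, ← Finset.mul_sum, hQ.2, mul_one]
  rw [hX_split, re_sum]
  refine Finset.sum_le_sum fun m _ => ?_
  have h := Complex.nonneg_iff.mp ((hX m).trace_mul_nonneg_s4 (hQ.1 m))
  rw [sub_mul, trace_sub, sub_re] at h
  linarith [h.1]

lemma primalObj_eq_sum_zOp_add (c : Fin M → Matrix n n ℂ) (a : Fin J → Fin M → Matrix n n ℂ)
    (lam : Fin J → ℝ) (Q : Fin M → Matrix n n ℂ) :
    primalObj c Q = ∑ m, (zOp c a lam m * Q m).trace.re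
      + ∑ j, lam j * ∑ m, (a j m * Q m).trace.re := by
  have hz : ∀ m, (zOp c a lam m * Q m).trace.re
      = (c m * Q m).trace.re - ∑ j, lam j * (a j m * Q m).trace.re := by
    intro m
    simp [zOp, sub_mul, Finset.sum_mul, trace_sum, re_sum]
  simp only [hz, primalObj, Finset.sum_sub_distrib, Finset.mul_sum]
  rw [Finset.sum_comm]
  ring

theorem primalObj_le_dualObj {c : Fin M → Matrix n n ℂ} {a : Fin J → Fin M → Matrix n n ℂ}
    {b : Fin J → ℝ} {Q : Fin M → Matrix n n ℂ} (hQ : Feasible a b Q) {X : Matrix n n ℂ}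
    {lam : Fin J → ℝ} (hlam : ∀ j, 0 ≤ lam j) (hX : ∀ m, (X - zOp c a lam m).PosSemidef) :
    primalObj c Q ≤ dualObj b X lam := by
  rw [primalObj_eq_sum_zOp_add c a lam, dualObj]
  gcongr with j
  · exact hQ.1.sum_re_trace_mul_le hX
  · exact hlam j
  · exact hQ.2 j

lemma dualObj_sum_zOp_mul_eq_primalObj {c : Fin M → Matrix n n ℂ}
    {a : Fin J → Fin M → Matrix n n ℂ} {b : Fin J → ℝ} {P : Fin M → Matrix n n ℂ}
    {lam : Fin J → ℝ} (hslack : ∀ j, lam j * (b j - ∑ m, (a j m * P m).trace.re) = 0) :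
    dualObj b (∑ m, zOp c a lam m * P m) lam = primalObj c P := by
  have hslack' : ∀ j, lam j * b j = lam j * ∑ m, (a j m * P m).trace.re := fun j => by
    linear_combination hslack j
  rw [dualObj, trace_sum, re_sum, primalObj_eq_sum_zOp_add c a lam P]
  simp only [hslack']

end

theorem X_form_implies_optimal_general {n : Type*} [Fintype n] [DecidableEq n]
    {M J : ℕ}
    (c : Fin M → Matrix n n ℂ) (a : Fin J → Fin M → Matrix n n ℂ) (b : Fin J → ℝ)
    (P : Fin M → Matrix n n ℂ)
    (lam : Fin J → ℝ) (hlam : ∀ j, 0 ≤ lam j)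
    (hpsd : ∀ m, ((∑ n', zOp c a lam n' * P n') - zOp c a lam m).PosSemidef)
    (hslack : ∀ j, lam j * (b j - ∑ m, ((a j m * P m).trace).re) = 0) :
    ∀ P', Feasible a b P' → primalObj c P' ≤ primalObj c P := fun P' hP' =>
  calc primalObj c P' ≤ dualObj b (∑ n', zOp c a lam n' * P n') lam :=
        primalObj_le_dualObj hP' hlam hpsd
    _ = primalObj c P := dualObj_sum_zOp_mul_eq_primalObj hslack

/-- Theorem 2, (3) ⇒ (1). -/
theorem X_form_implies_optimal {n : Type*} [Fintype n] [DecidableEq n] [Nonempty n]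
    {M J : ℕ}
    (c : Fin M → Matrix n n ℂ) (a : Fin J → Fin M → Matrix n n ℂ) (b : Fin J → ℝ)
    (hc : ∀ m, (c m).IsHermitian) (ha : ∀ j m, (a j m).IsHermitian)
    (P : Fin M → Matrix n n ℂ) (hP : Feasible a b P)
    (lam : Fin J → ℝ) (hlam : ∀ j, 0 ≤ lam j)
    (hpsd : ∀ m, ((∑ n', zOp c a lam n' * P n') - zOp c a lam m).PosSemidef)
    (hslack : ∀ j, lam j * (b j - ∑ m, ((a j m * P m).trace).re) = 0) :
    ∀ P', Feasible a b P' → primalObj c P' ≤ primalObj c P :=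
  X_form_implies_optimal_general c a b P lam hlam hpsd hslack
end
end

section
/- Minimax theorem for the generalized problem (Eq. (16)): if 𝓜ᵐᵐ is nonempty, then there exists a pair (μ*, Π*) with μ* in the probability simplex P and Π* ∈ 𝓜ᵐᵐ that is a saddle point of F, i.e. F(μ*, Π) ≤ F(μ*, Π*) ≤ F(μ, Π*) for all μ ∈ P and all Π ∈ 𝓜ᵐᵐ; consequently max_{Π ∈ 𝓜ᵐᵐ} min_{μ ∈ P} F(μ, Π) = F(μ*, Π*) = min_{μ ∈ P} max_{Π ∈ 𝓜ᵐᵐ} F(μ, Π). -/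
open Matrix Complex
open scoped ComplexOrder

noncomputable section

/-- The probability simplex `P` over `Fin K`. -/
def Simplex {K : ℕ} (μ : Fin K → ℝ) : Prop :=
  (∀ k, 0 ≤ μ k) ∧ ∑ k, μ k = 1

/-- The functions `f k (Π) = ∑ m, Re(Tr(c k m * Π m)) + d k`. -/
def fObj {n : Type*} [Fintype n] {M K : ℕ}
    (c : Fin K → Fin M → Matrix n n ℂ) (d : Fin K → ℝ)
    (k : Fin K) (P : Fin M → Matrix n n ℂ) : ℝ :=
  ∑ m, ((c k m * P m).trace).re + d k

/-- The payoff function `F(μ, Π) = ∑ k, μ k * f k (Π)`. -/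
def FObj {n : Type*} [Fintype n] {M K : ℕ}
    (c : Fin K → Fin M → Matrix n n ℂ) (d : Fin K → ℝ)
    (μ : Fin K → ℝ) (P : Fin M → Matrix n n ℂ) : ℝ :=
  ∑ k, μ k * fObj c d k P

/-- `F⋆(μ)`: the supremum of `F(μ, Π)` over feasible `Π`. -/
def Fstar {n : Type*} [Fintype n] [DecidableEq n] {M J K : ℕ}
    (a : Fin J → Fin M → Matrix n n ℂ) (b : Fin J → ℝ)
    (c : Fin K → Fin M → Matrix n n ℂ) (d : Fin K → ℝ)
    (μ : Fin K → ℝ) : ℝ :=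
  sSup ((fun P => FObj c d μ P) '' {P | Feasible a b P})

/-- A minimax solution (saddle point of `F`). -/
def IsMinimaxSol {n : Type*} [Fintype n] [DecidableEq n] {M J K : ℕ}
    (a : Fin J → Fin M → Matrix n n ℂ) (b : Fin J → ℝ)
    (c : Fin K → Fin M → Matrix n n ℂ) (d : Fin K → ℝ)
    (μs : Fin K → ℝ) (Ps : Fin M → Matrix n n ℂ) : Prop :=
  Simplex μs ∧ Feasible a b Ps ∧
    (∀ P, Feasible a b P → FObj c d μs P ≤ FObj c d μs Ps) ∧
    (∀ μ, Simplex μ → FObj c d μs Ps ≤ FObj c d μ Ps)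

/-! Each `f k` is affine and the feasible set is convex and compact: the diagonal of a POVM
element lies in `[0, 1]`, and its `2 × 2` principal minors give
`‖Π m i j‖ ^ 2 ≤ Π m i i * Π m j j`. Let `Π⋆` maximise `min_k f k` on the feasible set, with
value `v`. The convex set of vectors dominated by some `(f k Π)_k` misses the open orthant
`{y | ∀ k, v < y k}`, and a separating hyperplane between the two has a normal `μ⋆` in the
simplex with `F(μ⋆, Π) ≤ v ≤ F(μ, Π⋆)` for all feasible `Π` and all `μ`. -/

open Matrix

theorem dotProduct_const_of_mem_stdSimplex {ι : Type*} [Fintype ι] {μ : ι → ℝ}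
    (hμ : μ ∈ stdSimplex ℝ ι) (r : ℝ) : (μ ⬝ᵥ fun _ => r) = r := by
  simp [dotProduct, ← Finset.sum_mul, hμ.2]

theorem le_dotProduct_of_mem_stdSimplex {ι : Type*} [Fintype ι] {μ y : ι → ℝ}
    (hμ : μ ∈ stdSimplex ℝ ι) {r : ℝ} (h : ∀ i, r ≤ y i) : r ≤ μ ⬝ᵥ y :=
  calc r = μ ⬝ᵥ fun _ => r := (dotProduct_const_of_mem_stdSimplex hμ r).symm
    _ ≤ μ ⬝ᵥ y := dotProduct_le_dotProduct_of_nonneg_left h hμ.1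

theorem LinearMap.map_nonpos_of_forall_map_add_smul_lt {E : Type*} [AddCommGroup E]
    [Module ℝ E] (φ : E →ₗ[ℝ] ℝ) {y z : E} {u : ℝ} (h : ∀ t : ℝ, 0 ≤ t → φ (y + t • z) < u) :
    φ z ≤ 0 := by
  by_contra! hz
  have hy : φ y < u := by simpa using h 0 le_rfl
  have := h ((u - φ y) / φ z) (div_nonneg (sub_nonneg.2 hy.le) hz.le)
  rw [map_add, map_smul, smul_eq_mul, div_mul_cancel₀ _ hz.ne'] at this
  linarith

theorem LinearMap.exists_nonneg_eq_neg_dotProduct {ι : Type*} [Fintype ι]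
    (φ : (ι → ℝ) →ₗ[ℝ] ℝ) {u v : ℝ} (h : ∀ y, (∀ i, v < y i) → φ y < u) :
    ∃ w, 0 ≤ w ∧ ∀ y, φ y = -(w ⬝ᵥ y) := by
  classical
  refine ⟨fun i => -φ fun j => if i = j then 1 else 0, fun i => neg_nonneg.2 ?_, fun y => ?_⟩
  · refine φ.map_nonpos_of_forall_map_add_smul_lt (y := fun _ => v + 1) fun t ht => h _ fun j => ?_
    have : 0 ≤ t * if i = j then (1 : ℝ) else 0 := mul_nonneg ht (by split_ifs <;> norm_num)
    simp only [Pi.add_apply, Pi.smul_apply, smul_eq_mul]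
    linarith
  · simp [φ.pi_apply_eq_sum_univ y, dotProduct, mul_comm]

theorem exists_mem_stdSimplex_dotProduct_le {ι : Type*} [Fintype ι] {S : Set (ι → ℝ)}
    (hS : Convex ℝ S) (hSne : S.Nonempty) {v : ℝ} (hv : ∀ y ∈ S, ∃ i, y i ≤ v) :
    ∃ μ ∈ stdSimplex ℝ ι, ∀ y ∈ S, μ ⬝ᵥ y ≤ v := by
  set U : Set (ι → ℝ) := Set.univ.pi fun _ => Set.Ioi v
  have hdisj : Disjoint U S := Set.disjoint_left.2 fun y hyU hyS => by
    obtain ⟨i, hi⟩ := hv y hyS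
    exact (hyU i trivial).not_ge hi
  obtain ⟨φ, u, hφU, hφS⟩ := geometric_hahn_banach_open (convex_pi fun _ _ => convex_Ioi v)
    (isOpen_set_pi Set.finite_univ fun _ _ => isOpen_Ioi) hS hdisj
  obtain ⟨w, hw, hφ⟩ := φ.toLinearMap.exists_nonneg_eq_neg_dotProduct (u := u) (v := v)
    fun y hy => hφU y fun i _ => hy i
  simp only [ContinuousLinearMap.coe_coe] at hφ
  have hc : (fun _ => v + 1) ∈ U := fun _ _ => by simp
  set W := ∑ i, w i
  have hW : 0 < W := by
    refine (Finset.sum_nonneg fun i _ => hw i).lt_of_ne fun hW0 => ?_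
    have hw0 : w = 0 := funext fun i =>
      (Finset.sum_eq_zero_iff_of_nonneg fun i _ => hw i).1 hW0.symm i (Finset.mem_univ i)
    obtain ⟨y, hy⟩ := hSne
    linarith [hφU _ hc, hφS y hy, hφ y, hφ fun _ => v + 1, show w ⬝ᵥ y = 0 by simp [hw0],
      show (w ⬝ᵥ fun _ => v + 1) = 0 by simp [hw0]]
  set μ := W⁻¹ • w
  have hμ : μ ∈ stdSimplex ℝ ι :=
    ⟨fun i => mul_nonneg (inv_nonneg.2 hW.le) (hw i), by
      simp [μ, ← Finset.mul_sum, W, inv_mul_cancel₀ hW.ne']⟩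
  have hwμ : w = W • μ := by rw [smul_smul, mul_inv_cancel₀ hW.ne', one_smul]
  clear_value μ
  refine ⟨μ, hμ, fun y hy => le_of_forall_pos_lt_add fun ε hε => ?_⟩
  have h := (hφU (fun _ => v + ε) fun _ _ => show v < v + ε by linarith).trans_le (hφS y hy)
  rw [hφ, hφ, hwμ, smul_dotProduct, smul_dotProduct, dotProduct_const_of_mem_stdSimplex hμ,
    smul_eq_mul, smul_eq_mul, neg_lt_neg_iff] at h
  exact lt_of_mul_lt_mul_left h hW.le

theorem exists_saddlePoint_of_concaveOn {ι E : Type*} [Fintype ι] [Nonempty ι]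
    [TopologicalSpace E] [AddCommGroup E] [Module ℝ E] {T : Set E} (hT : IsCompact T)
    (hTne : T.Nonempty) {f : ι → E → ℝ} (hcont : ∀ i, ContinuousOn (f i) T)
    (hconc : ∀ i, ConcaveOn ℝ T (f i)) :
    ∃ μ ∈ stdSimplex ℝ ι, ∃ x ∈ T, (∀ x' ∈ T, μ ⬝ᵥ (f · x') ≤ μ ⬝ᵥ (f · x)) ∧
      ∀ μ' ∈ stdSimplex ℝ ι, μ ⬝ᵥ (f · x) ≤ μ' ⬝ᵥ (f · x) := by
  obtain ⟨i₀⟩ := ‹Nonempty ι›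
  set g : E → ℝ := fun x => Finset.univ.inf' Finset.univ_nonempty (f · x)
  obtain ⟨x₀, hx₀, hmax⟩ := hT.exists_isMaxOn hTne <|
    ContinuousOn.finset_inf'_apply Finset.univ_nonempty fun i _ => hcont i
  set S : Set (ι → ℝ) := {y | ∃ x ∈ T, ∀ i, y i ≤ f i x}
  have hS : Convex ℝ S := by
    rintro y ⟨x, hx, hy⟩ z ⟨x', hx', hz⟩ a b ha hb hab
    refine ⟨a • x + b • x', (hconc i₀).1 hx hx' ha hb hab, fun i => ?_⟩
    calc a * y i + b * z i ≤ a • f i x + b • f i x' := by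
          simp only [smul_eq_mul]; gcongr <;> simp_all
      _ ≤ f i (a • x + b • x') := (hconc i).2 hx hx' ha hb hab
  have hSv : ∀ y ∈ S, ∃ i, y i ≤ g x₀ := by
    rintro y ⟨x, hx, hy⟩
    obtain ⟨i, -, hi⟩ := Finset.exists_mem_eq_inf' Finset.univ_nonempty (f · x)
    exact ⟨i, (hy i).trans (hi ▸ hmax hx)⟩
  obtain ⟨μ, hμ, hμS⟩ :=
    exists_mem_stdSimplex_dotProduct_le hS ⟨_, x₀, hx₀, fun _ => le_rfl⟩ hSv
  have hup : ∀ x ∈ T, μ ⬝ᵥ (f · x) ≤ g x₀ := fun x hx => hμS _ ⟨x, hx, fun _ => le_rfl⟩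
  have hlow : ∀ μ' ∈ stdSimplex ℝ ι, g x₀ ≤ μ' ⬝ᵥ (f · x₀) := fun μ' hμ' =>
    le_dotProduct_of_mem_stdSimplex hμ' fun i => Finset.inf'_le _ (Finset.mem_univ i)
  exact ⟨μ, hμ, x₀, hx₀, fun x hx => (hup x hx).trans (hlow μ hμ),
    fun μ' hμ' => (hup x₀ hx₀).trans (hlow μ' hμ')⟩

section SaddleValue

variable {X Y α : Type*} [ConditionallyCompleteLattice α] {F : X → Y → α} {A : Set X}
  {B : Set Y} {x₀ : X} {y₀ : Y}

theorem csSup_image_csInf_eq_of_saddle (hx₀ : x₀ ∈ A) (hy₀ : y₀ ∈ B)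
    (hB : ∀ y ∈ B, F x₀ y ≤ F x₀ y₀) (hA : ∀ x ∈ A, F x₀ y₀ ≤ F x y₀)
    (hbdd : ∀ y ∈ B, BddBelow ((F · y) '' A)) :
    sSup ((fun y => sInf ((F · y) '' A)) '' B) = F x₀ y₀ := by
  refine IsGreatest.csSup_eq ⟨⟨y₀, hy₀, IsLeast.csInf_eq ⟨⟨x₀, hx₀, rfl⟩, ?_⟩⟩, ?_⟩
  · rintro _ ⟨x, hx, rfl⟩
    exact hA x hx
  · rintro _ ⟨y, hy, rfl⟩
    exact (csInf_le (hbdd y hy) ⟨x₀, hx₀, rfl⟩).trans (hB y hy)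

theorem csInf_image_csSup_eq_of_saddle (hx₀ : x₀ ∈ A) (hy₀ : y₀ ∈ B)
    (hB : ∀ y ∈ B, F x₀ y ≤ F x₀ y₀) (hA : ∀ x ∈ A, F x₀ y₀ ≤ F x y₀)
    (hbdd : ∀ x ∈ A, BddAbove (F x '' B)) :
    sInf ((fun x => sSup (F x '' B)) '' A) = F x₀ y₀ := by
  refine IsLeast.csInf_eq ⟨⟨x₀, hx₀, IsGreatest.csSup_eq ⟨⟨y₀, hy₀, rfl⟩, ?_⟩⟩, ?_⟩
  · rintro _ ⟨y, hy, rfl⟩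
    exact hB y hy
  · rintro _ ⟨x, hx, rfl⟩
    exact (hA x hx).trans (le_csSup (hbdd x hx) ⟨y₀, hy₀, rfl⟩)

end SaddleValue

theorem Matrix.PosSemidef.sq_norm_apply_le {𝕜 n : Type*} [RCLike 𝕜] [Fintype n]
    {A : Matrix n n 𝕜} (hA : A.PosSemidef) (i j : n) : (‖A i j‖ : 𝕜) ^ 2 ≤ A i i * A j j := by
  have hdet := (hA.submatrix ![i, j]).det_nonneg
  rw [det_fin_two] at hdet
  simp only [submatrix_apply, Matrix.cons_val_zero, Matrix.cons_val_one] at hdet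
  rw [← hA.1.apply j i, RCLike.star_def, RCLike.mul_conj] at hdet
  exact sub_nonneg.1 hdet

theorem Matrix.isClosed_setOf_posSemidef {𝕜 n : Type*} [RCLike 𝕜] [Fintype n] :
    IsClosed {A : Matrix n n 𝕜 | A.PosSemidef} := by
  simp_rw [posSemidef_iff_dotProduct_mulVec, Set.ofPred_and, Set.ofPred_forall]
  exact (isClosed_eq continuous_id.matrix_conjTranspose continuous_id).inter
    (isClosed_iInter fun x => isClosed_le continuous_const (by fun_prop))

theorem Matrix.convex_setOf_posSemidef {𝕜 n : Type*} [RCLike 𝕜] :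
    Convex ℝ {A : Matrix n n 𝕜 | A.PosSemidef} :=
  fun _ hA _ hB _ _ hs ht _ => (hA.smul hs).add (hB.smul ht)

def reTracePairing {n ι : Type*} [Fintype n] [Fintype ι] (C : ι → Matrix n n ℂ) :
    (ι → Matrix n n ℂ) →ₗ[ℝ] ℝ where
  toFun P := ∑ m, ((C m * P m).trace).re
  map_add' P Q := by simp [mul_add, Finset.sum_add_distrib]
  map_smul' r P := by simp [Finset.mul_sum]

theorem continuous_reTracePairing {n ι : Type*} [Fintype n] [Fintype ι] (C : ι → Matrix n n ℂ) :
    Continuous (reTracePairing C) :=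
  show Continuous fun P : ι → Matrix n n ℂ => ∑ m, ((C m * P m).trace).re by fun_prop

section POVM

variable {n : Type*} [Fintype n] [DecidableEq n] {M J : ℕ}

theorem IsPOVM.apply_self_le_one {P : Fin M → Matrix n n ℂ} (hP : IsPOVM P) (m : Fin M)
    (i : n) : P m i i ≤ 1 :=
  calc P m i i ≤ ∑ m', P m' i i :=
        Finset.single_le_sum (fun m' _ => (hP.1 m').diag_nonneg) (Finset.mem_univ m)
    _ = 1 := by rw [← Matrix.sum_apply, hP.2, one_apply_eq]

theorem IsPOVM.norm_apply_le_one {P : Fin M → Matrix n n ℂ} (hP : IsPOVM P) (m : Fin M)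
    (i j : n) : ‖P m i j‖ ≤ 1 := by
  have h := (hP.1 m).sq_norm_apply_le i j |>.trans <|
    mul_le_one₀ (hP.apply_self_le_one m i) (hP.1 m).diag_nonneg (hP.apply_self_le_one m j)
  rw [← RCLike.ofReal_pow, ← RCLike.ofReal_one, RCLike.ofReal_le_ofReal] at h
  exact (sq_le_one_iff₀ (norm_nonneg _)).1 h

theorem isClosed_setOf_isPOVM : IsClosed {P : Fin M → Matrix n n ℂ | IsPOVM P} := by
  simp_rw [IsPOVM, Set.ofPred_and, Set.ofPred_forall]
  exact (isClosed_iInter fun m => isClosed_setOf_posSemidef.preimage (continuous_apply m)).inter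
    (isClosed_eq (continuous_finsetSum _ fun m _ => continuous_apply m)
      (continuous_const (y := (1 : Matrix n n ℂ))))

theorem isCompact_setOf_isPOVM : IsCompact {P : Fin M → Matrix n n ℂ | IsPOVM P} := by
  have hbox : IsCompact (Set.univ.pi fun _ : Fin M => Set.univ.pi fun _ : n =>
      Set.univ.pi fun _ : n => Metric.closedBall (0 : ℂ) 1) :=
    isCompact_univ_pi fun _ => isCompact_univ_pi fun _ => isCompact_univ_pi fun _ =>
      isCompact_closedBall 0 1
  refine hbox.of_isClosed_subset isClosed_setOf_isPOVM fun P hP m _ i _ j _ => ?_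
  simpa using hP.norm_apply_le_one m i j

theorem convex_setOf_isPOVM : Convex ℝ {P : Fin M → Matrix n n ℂ | IsPOVM P} := by
  rintro P ⟨hP, hP1⟩ Q ⟨hQ, hQ1⟩ s t hs ht hst
  refine ⟨fun m => convex_setOf_posSemidef (hP m) (hQ m) hs ht hst, ?_⟩
  simp [Finset.sum_add_distrib, ← Finset.smul_sum, hP1, hQ1, ← add_smul, hst]

theorem setOf_feasible (a : Fin J → Fin M → Matrix n n ℂ) (b : Fin J → ℝ) :
    {P | Feasible a b P} = {P | IsPOVM P} ∩ ⋂ j, {P | reTracePairing (a j) P ≤ b j} := by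
  ext P
  simp [Feasible, reTracePairing]

theorem isCompact_setOf_feasible (a : Fin J → Fin M → Matrix n n ℂ) (b : Fin J → ℝ) :
    IsCompact {P | Feasible a b P} := by
  rw [setOf_feasible]
  exact isCompact_setOf_isPOVM.inter_right <| isClosed_iInter fun j =>
    isClosed_le (continuous_reTracePairing (a j)) continuous_const

theorem convex_setOf_feasible (a : Fin J → Fin M → Matrix n n ℂ) (b : Fin J → ℝ) :
    Convex ℝ {P | Feasible a b P} := by
  rw [setOf_feasible]
  exact convex_setOf_isPOVM.inter <| convex_iInter fun j =>
    convex_halfSpace_le (reTracePairing (a j)).isLinear (b j)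

end POVM

theorem minimax_theorem_general
    {n : Type*} [Fintype n] [DecidableEq n]
    {M J K : ℕ}
    (a : Fin J → Fin M → Matrix n n ℂ) (b : Fin J → ℝ)
    (c : Fin K → Fin M → Matrix n n ℂ) (d : Fin K → ℝ)
    (hK : 0 < K)
    (hne : ∃ P, Feasible a b P) :
    ∃ (μs : Fin K → ℝ) (Ps : Fin M → Matrix n n ℂ),
      IsMinimaxSol a b c d μs Ps ∧
      sSup ((fun P => sInf ((fun μ => FObj c d μ P) '' {μ | Simplex μ})) ''
          {P | Feasible a b P}) = FObj c d μs Ps ∧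
      FObj c d μs Ps =
        sInf ((fun μ => sSup ((fun P => FObj c d μ P) '' {P | Feasible a b P})) ''
          {μ | Simplex μ}) := by
  have : Nonempty (Fin K) := ⟨⟨0, hK⟩⟩
  have hfc : ∀ k, Continuous (fObj c d k) := fun k =>
    (continuous_reTracePairing (c k)).add continuous_const
  obtain ⟨μs, hμs, Ps, hPs, hmax, hmin⟩ := exists_saddlePoint_of_concaveOn
    (isCompact_setOf_feasible a b) hne (fun k => (hfc k).continuousOn)
    fun k => ((reTracePairing (c k)).concaveOn (convex_setOf_feasible a b)).add_const (d k)
  refine ⟨μs, Ps, ⟨hμs, hPs, hmax, hmin⟩, csSup_image_csInf_eq_of_saddle hμs hPs hmax hmin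
    fun P _ => (isCompact_stdSimplex ℝ (Fin K)).bddBelow_image ?_,
    (csInf_image_csSup_eq_of_saddle hμs hPs hmax hmin
      fun μ _ => (isCompact_setOf_feasible a b).bddAbove_image ?_).symm⟩
  · exact Continuous.continuousOn (continuous_finsetSum _ fun k _ => by fun_prop)
  · exact Continuous.continuousOn (continuous_finsetSum _ fun k _ => (hfc k).const_mul _)

/-- The minimax theorem (Eq. (16)): if the feasible set is nonempty,
there exists a saddle point `(μs, Π⋆)` of `F`, and the max-min and min-max
values both equal `F(μs, Π⋆)`. -/
theorem minimax_theorem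
    {n : Type*} [Fintype n] [DecidableEq n] [Nonempty n]
    {M J K : ℕ}
    (a : Fin J → Fin M → Matrix n n ℂ) (b : Fin J → ℝ)
    (c : Fin K → Fin M → Matrix n n ℂ) (d : Fin K → ℝ)
    (ha : ∀ j m, (a j m).IsHermitian) (hc : ∀ k m, (c k m).IsHermitian)
    (hK : 0 < K)
    (hne : ∃ P, Feasible a b P) :
    ∃ (μs : Fin K → ℝ) (Ps : Fin M → Matrix n n ℂ),
      IsMinimaxSol a b c d μs Ps ∧
      sSup ((fun P => sInf ((fun μ => FObj c d μ P) '' {μ | Simplex μ})) ''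
          {P | Feasible a b P}) = FObj c d μs Ps ∧
      FObj c d μs Ps =
        sInf ((fun μ => sSup ((fun P => FObj c d μ P) '' {P | Feasible a b P})) ''
          {μ | Simplex μ}) :=
  minimax_theorem_general a b c d hK hne
end
end

section
/- Theorem 3, (2) ⇒ (1): let μ* ∈ P and Π* ∈ 𝓜ᵐᵐ, and suppose f k (Π*) ≥ F*(μ*) for every k ∈ Fin K, where F*(μ*) is the supremum of F(μ*, Π) over Π ∈ 𝓜ᵐᵐ. Then (μ*, Π*) is a minimax solution, i.e. F(μ*, Π) ≤ F(μ*, Π*) ≤ F(μ, Π*) for all μ ∈ P and all Π ∈ 𝓜ᵐᵐ. -/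
open Matrix Complex
open scoped ComplexOrder

noncomputable section

/-!
Every entry of a POVM element has modulus at most `1`, so `F(μ⋆, ·)` is bounded on `𝓜ᵐᵐ` and
`F⋆(μ⋆)` is a genuine supremum. Since every `f k (Π⋆)` is at least `F⋆(μ⋆)`, so is every convex
combination `F(μ, Π⋆)`; hence `F(μ⋆, Π) ≤ F⋆(μ⋆) ≤ F(μ, Π⋆)`, which gives both saddle-point
inequalities at once.
-/

namespace Matrix.PosSemidef

variable {𝕜 n : Type*} [RCLike 𝕜]

/-- The `2 × 2` principal minor on rows `i, j` has nonnegative determinant. -/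
lemma norm_apply_sq_le {Q : Matrix n n 𝕜} (hQ : Q.PosSemidef) (i j : n) :
    ‖Q i j‖ ^ 2 ≤ RCLike.re (Q i i) * RCLike.re (Q j j) := by
  have hdet := (hQ.submatrix ![i, j]).det_nonneg
  rw [det_fin_two] at hdet
  simp only [submatrix_apply, Matrix.cons_val_zero, Matrix.cons_val_one] at hdet
  rw [← hQ.isHermitian.apply j i, ← hQ.isHermitian.coe_re_apply_self i,
    ← hQ.isHermitian.coe_re_apply_self j, RCLike.star_def, RCLike.mul_conj,
    ← RCLike.ofReal_mul, ← RCLike.ofReal_pow, ← RCLike.ofReal_sub] at hdet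
  exact sub_nonneg.mp (RCLike.ofReal_nonneg.mp hdet)

lemma re_apply_self_nonneg [Fintype n] {Q : Matrix n n 𝕜} (hQ : Q.PosSemidef) (i : n) :
    0 ≤ RCLike.re (Q i i) :=
  RCLike.nonneg_iff.mp hQ.diag_nonneg |>.1

end Matrix.PosSemidef

lemma Matrix.re_trace_mul_le_sum_norm {𝕜 n : Type*} [RCLike 𝕜] [Fintype n]
    (A B : Matrix n n 𝕜) (hB : ∀ i j, ‖B i j‖ ≤ 1) :
    RCLike.re (A * B).trace ≤ ∑ i, ∑ j, ‖A i j‖ :=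
  calc RCLike.re (A * B).trace ≤ ‖(A * B).trace‖ := RCLike.re_le_norm _
    _ ≤ ∑ i, ∑ j, ‖A i j * B j i‖ := by
      simp only [trace, diag, mul_apply]
      exact (norm_sum_le _ _).trans (Finset.sum_le_sum fun i _ => norm_sum_le _ _)
    _ ≤ ∑ i, ∑ j, ‖A i j‖ := by
      gcongr with i _ j _
      rw [norm_mul]
      exact mul_le_of_le_one_right (norm_nonneg _) (hB j i)

namespace IsPOVM

variable {n : Type*} [Fintype n] [DecidableEq n] {M : ℕ} {P : Fin M → Matrix n n ℂ}

lemma re_apply_self_le_one (hP : IsPOVM P) (m : Fin M) (i : n) : (P m i i).re ≤ 1 :=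
  calc (P m i i).re ≤ ∑ m', (P m' i i).re :=
        Finset.single_le_sum (fun m' _ => (hP.1 m').re_apply_self_nonneg i) (Finset.mem_univ m)
    _ = 1 := by rw [← Complex.re_sum, ← Matrix.sum_apply, hP.2]; simp

lemma norm_apply_le_one_s7 (hP : IsPOVM P) (m : Fin M) (i j : n) : ‖P m i j‖ ≤ 1 := by
  have hsq : ‖P m i j‖ ^ 2 ≤ 1 :=
    ((hP.1 m).norm_apply_sq_le i j).trans <|
      mul_le_one₀ (hP.re_apply_self_le_one m i) ((hP.1 m).re_apply_self_nonneg j)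
        (hP.re_apply_self_le_one m j)
  exact (pow_le_one_iff_of_nonneg (norm_nonneg _) two_ne_zero).mp hsq

end IsPOVM

lemma FObj_le_Fstar {n : Type*} [Fintype n] [DecidableEq n] {M J K : ℕ}
    (a : Fin J → Fin M → Matrix n n ℂ) (b : Fin J → ℝ)
    (c : Fin K → Fin M → Matrix n n ℂ) (d : Fin K → ℝ)
    {μ : Fin K → ℝ} (hμ : ∀ k, 0 ≤ μ k) {P : Fin M → Matrix n n ℂ}
    (hP : Feasible a b P) : FObj c d μ P ≤ Fstar a b c d μ := by
  refine le_csSup ⟨∑ k, μ k * ((∑ m, ∑ i, ∑ j, ‖c k m i j‖) + |d k|), ?_⟩ ⟨P, hP, rfl⟩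
  rintro _ ⟨Q, hQ, rfl⟩
  refine Finset.sum_le_sum fun k _ => mul_le_mul_of_nonneg_left ?_ (hμ k)
  exact add_le_add (Finset.sum_le_sum fun m _ =>
    Matrix.re_trace_mul_le_sum_norm _ _ (hQ.1.norm_apply_le_one_s7 m)) (le_abs_self _)

lemma le_FObj_of_forall_le_fObj {n : Type*} [Fintype n] {M K : ℕ}
    {c : Fin K → Fin M → Matrix n n ℂ} {d : Fin K → ℝ} {μ : Fin K → ℝ} (hμ : Simplex μ)
    {P : Fin M → Matrix n n ℂ} {t : ℝ} (h : ∀ k, t ≤ fObj c d k P) : t ≤ FObj c d μ P :=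
  calc t = ∑ k, μ k * t := by rw [← Finset.sum_mul, hμ.2, one_mul]
    _ ≤ FObj c d μ P := Finset.sum_le_sum fun k _ => mul_le_mul_of_nonneg_left (h k) (hμ.1 k)

theorem fk_ge_implies_minimax_sol_general
    {n : Type*} [Fintype n] [DecidableEq n]
    {M J K : ℕ}
    (a : Fin J → Fin M → Matrix n n ℂ) (b : Fin J → ℝ)
    (c : Fin K → Fin M → Matrix n n ℂ) (d : Fin K → ℝ)
    (μs : Fin K → ℝ) (Ps : Fin M → Matrix n n ℂ)
    (hμ : Simplex μs) (hP : Feasible a b Ps)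
    (h : ∀ k, Fstar a b c d μs ≤ fObj c d k Ps) :
    IsMinimaxSol a b c d μs Ps :=
  ⟨hμ, hP,
    fun _ hQ => (FObj_le_Fstar a b c d hμ.1 hQ).trans (le_FObj_of_forall_le_fObj hμ h),
    fun _ hμ' => (FObj_le_Fstar a b c d hμ.1 hP).trans (le_FObj_of_forall_le_fObj hμ' h)⟩

/-- Theorem 3, (2) ⇒ (1): if `f k (Π⋆) ≥ F⋆(μs)` for all `k`, then `(μs, Π⋆)`
is a minimax solution. -/
theorem fk_ge_implies_minimax_sol
    {n : Type*} [Fintype n] [DecidableEq n] [Nonempty n]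
    {M J K : ℕ}
    (a : Fin J → Fin M → Matrix n n ℂ) (b : Fin J → ℝ)
    (c : Fin K → Fin M → Matrix n n ℂ) (d : Fin K → ℝ)
    (ha : ∀ j m, (a j m).IsHermitian) (hc : ∀ k m, (c k m).IsHermitian)
    (μs : Fin K → ℝ) (Ps : Fin M → Matrix n n ℂ)
    (hμ : Simplex μs) (hP : Feasible a b Ps)
    (h : ∀ k, Fstar a b c d μs ≤ fObj c d k Ps) :
    IsMinimaxSol a b c d μs Ps :=
  fk_ge_implies_minimax_sol_general a b c d μs Ps hμ hP h
end
end

section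
/- Theorem 4: assume 𝓜ᵐᵐ is nonempty and a minimax solution exists. A POVM Π⁺ ∈ 𝓜ᵐᵐ maximizes f_min(Π) = min_{k ∈ Fin K} f k (Π) over 𝓜ᵐᵐ if and only if Π⁺ is a minimax measurement, i.e. there exists μ⁺ ∈ P such that (μ⁺, Π⁺) is a minimax solution (saddle point of F). -/
open Matrix Complex
open scoped ComplexOrder

noncomputable section

/-!
Since the weights `μ` range over the simplex, `f_min(Π) ≤ F(μ, Π)` for every `μ`, with equality
at a saddle point `(μs, Ps)` because the minimizing player may put all weight on a single `k`.
Hence for a maximizer `Pp` of `f_min`, feasible `Π` and `μ` in the simplex,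
`F(μs, Π) ≤ F(μs, Ps) = f_min(Ps) ≤ f_min(Pp) ≤ F(μ, Pp)`, so `(μs, Pp)` is a saddle point;
conversely, if `(μp, Pp)` is one then `f_min(Π) ≤ F(μp, Π) ≤ F(μp, Pp) = f_min(Pp)`.
-/

namespace Simplex

variable {K : ℕ} {μ : Fin K → ℝ}

theorem nonempty (hμ : Simplex μ) : Nonempty (Fin K) := by
  by_contra h
  have : IsEmpty (Fin K) := not_nonempty_iff.mp h
  simpa using hμ.2

theorem single (k : Fin K) : Simplex (Pi.single k 1) :=
  ⟨fun k' => by by_cases h : k' = k <;> simp [h], by simp⟩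

theorem iInf_le_sum_mul (hμ : Simplex μ) (v : Fin K → ℝ) :
    ⨅ k, v k ≤ ∑ k, μ k * v k :=
  calc ⨅ k, v k = ∑ k, μ k * ⨅ k', v k' := by rw [← Finset.sum_mul, hμ.2, one_mul]
    _ ≤ ∑ k, μ k * v k := Finset.sum_le_sum fun k _ =>
      mul_le_mul_of_nonneg_left (ciInf_le (Finite.bddBelow_range v) k) (hμ.1 k)

end Simplex

section Minimax

variable {n : Type*} [Fintype n] {M K : ℕ}
  {c : Fin K → Fin M → Matrix n n ℂ} {d : Fin K → ℝ}

theorem FObj_single (k : Fin K) (P : Fin M → Matrix n n ℂ) :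
    FObj c d (Pi.single k 1) P = fObj c d k P := by
  simp [FObj, Pi.single_apply, ite_mul]

theorem iInf_fObj_le_FObj {μ : Fin K → ℝ} (hμ : Simplex μ) (P : Fin M → Matrix n n ℂ) :
    ⨅ k, fObj c d k P ≤ FObj c d μ P :=
  hμ.iInf_le_sum_mul _

variable [DecidableEq n] {J : ℕ} {a : Fin J → Fin M → Matrix n n ℂ} {b : Fin J → ℝ}

theorem IsMinimaxSol.FObj_eq_iInf {μs : Fin K → ℝ} {Ps : Fin M → Matrix n n ℂ}
    (h : IsMinimaxSol a b c d μs Ps) : FObj c d μs Ps = ⨅ k, fObj c d k Ps := by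
  have := h.1.nonempty
  refine le_antisymm (le_ciInf fun k => ?_) (iInf_fObj_le_FObj h.1 Ps)
  simpa only [FObj_single] using h.2.2.2 _ (Simplex.single k)

theorem IsMinimaxSol.iInf_fObj_le {μs : Fin K → ℝ} {Ps P : Fin M → Matrix n n ℂ}
    (h : IsMinimaxSol a b c d μs Ps) (hP : Feasible a b P) :
    ⨅ k, fObj c d k P ≤ ⨅ k, fObj c d k Ps :=
  calc ⨅ k, fObj c d k P ≤ FObj c d μs P := iInf_fObj_le_FObj h.1 P
    _ ≤ FObj c d μs Ps := h.2.2.1 P hP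
    _ = ⨅ k, fObj c d k Ps := h.FObj_eq_iInf

theorem isMinimaxSol_of_forall_FObj_le {μ₀ : Fin K → ℝ} {P₀ : Fin M → Matrix n n ℂ}
    (hμ₀ : Simplex μ₀) (hP₀ : Feasible a b P₀)
    (hle : ∀ μ P, Simplex μ → Feasible a b P → FObj c d μ₀ P ≤ FObj c d μ P₀) :
    IsMinimaxSol a b c d μ₀ P₀ :=
  ⟨hμ₀, hP₀, fun P hP => hle μ₀ P hμ₀ hP, fun μ hμ => hle μ P₀ hμ hP₀⟩

theorem IsMinimaxSol.of_maximizes_iInf_fObj {μs : Fin K → ℝ} {Ps Pp : Fin M → Matrix n n ℂ}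
    (h : IsMinimaxSol a b c d μs Ps) (hPp : Feasible a b Pp)
    (hmax : ∀ P, Feasible a b P → ⨅ k, fObj c d k P ≤ ⨅ k, fObj c d k Pp) :
    IsMinimaxSol a b c d μs Pp :=
  isMinimaxSol_of_forall_FObj_le h.1 hPp fun μ P hμ hP =>
    calc FObj c d μs P ≤ FObj c d μs Ps := h.2.2.1 P hP
      _ = ⨅ k, fObj c d k Ps := h.FObj_eq_iInf
      _ ≤ ⨅ k, fObj c d k Pp := hmax Ps h.2.1
      _ ≤ FObj c d μ Pp := iInf_fObj_le_FObj hμ Pp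

end Minimax

theorem minimax_measurement_iff_maximizes_fmin_general
    {n : Type*} [Fintype n] [DecidableEq n]
    {M J K : ℕ}
    (a : Fin J → Fin M → Matrix n n ℂ) (b : Fin J → ℝ)
    (c : Fin K → Fin M → Matrix n n ℂ) (d : Fin K → ℝ)
    (hex : ∃ μs Ps, IsMinimaxSol a b c d μs Ps)
    (Pp : Fin M → Matrix n n ℂ) (hPp : Feasible a b Pp) :
    (∀ P, Feasible a b P →
        (⨅ k, fObj c d k P) ≤ (⨅ k, fObj c d k Pp)) ↔
      ∃ μp, IsMinimaxSol a b c d μp Pp := by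
  obtain ⟨μs, Ps, hs⟩ := hex
  exact ⟨fun hmax => ⟨μs, hs.of_maximizes_iInf_fObj hPp hmax⟩,
    fun ⟨_, hp⟩ _ hP => hp.iInf_fObj_le hP⟩

/-- Theorem 4: assuming a minimax solution exists, a feasible POVM `Π⁺` maximizes
`f_min(Π) = min_k f k (Π)` over the feasible set if and only if it is a minimax
measurement. -/
theorem minimax_measurement_iff_maximizes_fmin
    {n : Type*} [Fintype n] [DecidableEq n] [Nonempty n]
    {M J K : ℕ}
    (a : Fin J → Fin M → Matrix n n ℂ) (b : Fin J → ℝ)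
    (c : Fin K → Fin M → Matrix n n ℂ) (d : Fin K → ℝ)
    (ha : ∀ j m, (a j m).IsHermitian) (hc : ∀ k m, (c k m).IsHermitian)
    (hK : 0 < K)
    (hne : ∃ P, Feasible a b P)
    (hex : ∃ μs Ps, IsMinimaxSol a b c d μs Ps)
    (Pp : Fin M → Matrix n n ℂ) (hPp : Feasible a b Pp) :
    (∀ P, Feasible a b P →
        (⨅ k, fObj c d k P) ≤ (⨅ k, fObj c d k Pp)) ↔
      ∃ μp, IsMinimaxSol a b c d μp Pp :=
  minimax_measurement_iff_maximizes_fmin_general a b c d hex Pp hPp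
end
end

section
/- Lemma 1, second part: under the covariance assumptions on the constraints, for every Φ ∈ 𝓜ᵐᵐ the averaged family Π defined by Π m = (1/|G|) ∑_{g ∈ G} (U g)⁻¹ * Φ (g • m) * (U g) belongs to 𝓜ᵐᵐ and is G-covariant: (U g) * Π m * (U g)† = Π (g • m) for all g ∈ G and m ∈ Fin M. -/
/-!
Each `κ_g` maps `𝓜ᵐᵐ` to itself: conjugation by a unitary preserves positivity and the
identity, reindexing by `g` preserves `∑ m, Φ m`, and by cyclicity of the trace together with
the covariance of `a` and `b` the `j`-th constraint for `κ_g Φ` is the `(g • j)`-th constraint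
for `Φ`. The feasible set is convex, so the average `Π` is feasible. Covariance of `Π` holds
because `g · κ_h Φ m = κ_{h g⁻¹} Φ (g • m)` and `h ↦ h g⁻¹` permutes `G`.
-/

open Matrix Complex
open scoped ComplexOrder

noncomputable section

/-- The action `g · A = (U g) * A * (U g)†` of a group on matrices induced by a
unitary representation `U`. -/
def conjAct {n : Type*} [Fintype n] [DecidableEq n] {G : Type*} [Group G]
    (U : G →* Matrix.unitaryGroup n ℂ) (g : G) (A : Matrix n n ℂ) : Matrix n n ℂ :=
  (U g : Matrix n n ℂ) * A * star (U g : Matrix n n ℂ)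

/-- The mapping `κ_g` sending `Φ` to `m ↦ (U g)⁻¹ * Φ (g • m) * (U g)`
(note `(U g)⁻¹ = (U g)† = star (U g)`). -/
def kappa {n : Type*} [Fintype n] [DecidableEq n] {G : Type*} [Group G] {M : ℕ}
    [MulAction G (Fin M)]
    (U : G →* Matrix.unitaryGroup n ℂ) (g : G)
    (Φ : Fin M → Matrix n n ℂ) : Fin M → Matrix n n ℂ :=
  fun m => star (U g : Matrix n n ℂ) * Φ (g • m) * (U g : Matrix n n ℂ)

lemma sum_comp_smul {G α β : Type*} [Group G] [MulAction G α] [Fintype α] [AddCommMonoid β]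
    (g : G) (f : α → β) : ∑ x, f (g • x) = ∑ x, f x :=
  Equiv.sum_comp (MulAction.toPerm g) f

section Conjugation

variable {n : Type*} [Fintype n] [DecidableEq n] {G : Type*} [Group G]
  (U : G →* Matrix.unitaryGroup n ℂ)

lemma star_unitaryRep_eq_inv (g : G) :
    star (U g : Matrix n n ℂ) = (U g⁻¹ : Matrix n n ℂ) := by
  rw [map_inv, ← Unitary.star_eq_inv]
  rfl

lemma conjAct_mul (g h : G) (A : Matrix n n ℂ) :
    conjAct U (g * h) A = conjAct U g (conjAct U h A) := by
  simp only [conjAct, map_mul, Submonoid.coe_mul, star_mul, Matrix.mul_assoc]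

lemma conjAct_one_right (g : G) : conjAct U g 1 = 1 := by
  rw [conjAct, Matrix.mul_one]
  exact (U g).prop.2

lemma conjAct_smul (g : G) (c : ℂ) (A : Matrix n n ℂ) :
    conjAct U g (c • A) = c • conjAct U g A := by
  rw [conjAct, conjAct, Matrix.mul_smul, Matrix.smul_mul]

lemma conjAct_sum {ι : Type*} (g : G) (s : Finset ι) (A : ι → Matrix n n ℂ) :
    conjAct U g (∑ i ∈ s, A i) = ∑ i ∈ s, conjAct U g (A i) := by
  rw [conjAct, Finset.mul_sum, Finset.sum_mul]
  rfl

lemma posSemidef_conjAct {A : Matrix n n ℂ} (hA : A.PosSemidef) (g : G) :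
    (conjAct U g A).PosSemidef := by
  simpa only [conjAct, Matrix.star_eq_conjTranspose] using
    hA.mul_mul_conjTranspose_same (U g : Matrix n n ℂ)

lemma trace_mul_conjAct_inv (g : G) (A B : Matrix n n ℂ) :
    (A * conjAct U g⁻¹ B).trace = (conjAct U g A * B).trace := by
  rw [conjAct, conjAct, ← star_unitaryRep_eq_inv, star_star, ← Matrix.mul_assoc,
    ← Matrix.mul_assoc, Matrix.trace_mul_cycle, Matrix.mul_assoc _ A]

variable {M J : ℕ} [MulAction G (Fin M)]

lemma kappa_apply (g : G) (Φ : Fin M → Matrix n n ℂ) (m : Fin M) :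
    kappa U g Φ m = conjAct U g⁻¹ (Φ (g • m)) := by
  rw [kappa, conjAct, ← star_unitaryRep_eq_inv, star_star]

lemma conjAct_kappa (g h : G) (Φ : Fin M → Matrix n n ℂ) (m : Fin M) :
    conjAct U g (kappa U h Φ m) = kappa U (h * g⁻¹) Φ (g • m) := by
  rw [kappa_apply, kappa_apply, ← conjAct_mul, _root_.mul_inv_rev, inv_inv, smul_smul,
    inv_mul_cancel_right]

lemma isPOVM_kappa {Φ : Fin M → Matrix n n ℂ} (hΦ : IsPOVM Φ) (g : G) :
    IsPOVM (kappa U g Φ) := by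
  obtain ⟨hpsd, hsum⟩ := hΦ
  refine ⟨fun m => ?_, ?_⟩
  · rw [kappa_apply]
    exact posSemidef_conjAct U (hpsd _) _
  · simp only [kappa_apply]
    rw [← conjAct_sum, sum_comp_smul g Φ, hsum, conjAct_one_right]

lemma feasible_kappa [MulAction G (Fin J)] {a : Fin J → Fin M → Matrix n n ℂ} {b : Fin J → ℝ}
    (hcova : ∀ (g : G) j m, conjAct U g (a j m) = a (g • j) (g • m))
    (hcovb : ∀ (g : G) j, b j = b (g • j))
    {Φ : Fin M → Matrix n n ℂ} (hΦ : Feasible a b Φ) (g : G) :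
    Feasible a b (kappa U g Φ) := by
  refine ⟨isPOVM_kappa U hΦ.1 g, fun j => ?_⟩
  calc ∑ m, ((a j m * kappa U g Φ m).trace).re
      = ∑ m, ((a (g • j) (g • m) * Φ (g • m)).trace).re := by
        simp only [kappa_apply, trace_mul_conjAct_inv, hcova]
    _ = ∑ m, ((a (g • j) m * Φ m).trace).re :=
        sum_comp_smul g fun m => ((a (g • j) m * Φ m).trace).re
    _ ≤ b j := hcovb g j ▸ hΦ.2 (g • j)

end Conjugation

section Averaging

variable {n : Type*} [Fintype n] [DecidableEq n] {M J : ℕ} {ι : Type*} [Fintype ι] [Nonempty ι]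

lemma isPOVM_average {P : ι → Fin M → Matrix n n ℂ} (hP : ∀ i, IsPOVM (P i)) :
    IsPOVM fun m => (Fintype.card ι : ℂ)⁻¹ • ∑ i, P i m := by
  refine ⟨fun m => (posSemidef_sum _ fun i _ => (hP i).1 m).smul (by positivity), ?_⟩
  rw [← Finset.smul_sum, Finset.sum_comm]
  simp only [fun i => (hP i).2]
  rw [Finset.sum_const, Finset.card_univ, ← Nat.cast_smul_eq_nsmul ℂ, smul_smul,
    inv_mul_cancel₀ (by simp), one_smul]

lemma feasible_average {a : Fin J → Fin M → Matrix n n ℂ} {b : Fin J → ℝ}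
    {P : ι → Fin M → Matrix n n ℂ} (hP : ∀ i, Feasible a b (P i)) :
    Feasible a b fun m => (Fintype.card ι : ℂ)⁻¹ • ∑ i, P i m := by
  refine ⟨isPOVM_average fun i => (hP i).1, fun j => ?_⟩
  have hre : ∀ m, ((a j m * ((Fintype.card ι : ℂ)⁻¹ • ∑ i, P i m)).trace).re
      = (Fintype.card ι : ℝ)⁻¹ * ∑ i, ((a j m * P i m).trace).re := fun m => by
    rw [Matrix.mul_smul, Matrix.trace_smul, Matrix.mul_sum, Matrix.trace_sum, smul_eq_mul,
      ← Complex.ofReal_natCast, ← Complex.ofReal_inv, Complex.re_ofReal_mul, Complex.re_sum]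
  calc ∑ m, ((a j m * ((Fintype.card ι : ℂ)⁻¹ • ∑ i, P i m)).trace).re
      = (Fintype.card ι : ℝ)⁻¹ * ∑ i, ∑ m, ((a j m * P i m).trace).re := by
        simp only [hre, ← Finset.mul_sum]
        rw [Finset.sum_comm]
    _ ≤ (Fintype.card ι : ℝ)⁻¹ * ∑ _i : ι, b j := by
        gcongr with i
        exact (hP i).2 j
    _ = b j := by
        rw [Finset.sum_const, Finset.card_univ, nsmul_eq_mul,
          inv_mul_cancel_left₀ (by positivity)]

end Averaging

section GroupAverage

variable {n : Type*} [Fintype n] [DecidableEq n] {G : Type*} [Group G] [Fintype G]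
  {M : ℕ} [MulAction G (Fin M)] (U : G →* Matrix.unitaryGroup n ℂ)

def groupAverage (Φ : Fin M → Matrix n n ℂ) : Fin M → Matrix n n ℂ :=
  fun m => (Fintype.card G : ℂ)⁻¹ • ∑ g : G, kappa U g Φ m

lemma conjAct_groupAverage (Φ : Fin M → Matrix n n ℂ) (g : G) (m : Fin M) :
    conjAct U g (groupAverage U Φ m) = groupAverage U Φ (g • m) := by
  rw [groupAverage, conjAct_smul, conjAct_sum, groupAverage]
  simp only [conjAct_kappa]
  exact congrArg _ (Equiv.sum_comp (Equiv.mulRight g⁻¹) fun h => kappa U h Φ (g • m))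

end GroupAverage

theorem averaged_povm_feasible_and_covariant_general
    {n : Type*} [Fintype n] [DecidableEq n]
    {G : Type*} [Group G] [Fintype G]
    {M J : ℕ} [MulAction G (Fin M)] [MulAction G (Fin J)]
    (U : G →* Matrix.unitaryGroup n ℂ)
    (a : Fin J → Fin M → Matrix n n ℂ) (b : Fin J → ℝ)
    (hcova : ∀ (g : G) j m, conjAct U g (a j m) = a (g • j) (g • m))
    (hcovb : ∀ (g : G) j, b j = b (g • j))
    (Φ : Fin M → Matrix n n ℂ) (hΦ : Feasible a b Φ) :
    Feasible a b (fun m => (Fintype.card G : ℂ)⁻¹ • ∑ g : G, kappa U g Φ m) ∧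
    ∀ (g : G) (m : Fin M),
      conjAct U g ((Fintype.card G : ℂ)⁻¹ • ∑ h : G, kappa U h Φ m) =
        (Fintype.card G : ℂ)⁻¹ • ∑ h : G, kappa U h Φ (g • m) :=
  ⟨feasible_average fun g => feasible_kappa U hcova hcovb hΦ g,
    fun g m => conjAct_groupAverage U Φ g m⟩

/-- Lemma 1, second part: the group average of a feasible POVM is feasible
and `G`-covariant. -/
theorem averaged_povm_feasible_and_covariant
    {n : Type*} [Fintype n] [DecidableEq n] [Nonempty n]
    {G : Type*} [Group G] [Fintype G]
    {M J : ℕ} [MulAction G (Fin M)] [MulAction G (Fin J)]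
    (U : G →* Matrix.unitaryGroup n ℂ)
    (a : Fin J → Fin M → Matrix n n ℂ) (b : Fin J → ℝ)
    (ha : ∀ j m, (a j m).IsHermitian)
    (hne : ∃ P, Feasible a b P)
    (hcova : ∀ (g : G) j m, conjAct U g (a j m) = a (g • j) (g • m))
    (hcovb : ∀ (g : G) j, b j = b (g • j))
    (Φ : Fin M → Matrix n n ℂ) (hΦ : Feasible a b Φ) :
    Feasible a b (fun m => (Fintype.card G : ℂ)⁻¹ • ∑ g : G, kappa U g Φ m) ∧
    ∀ (g : G) (m : Fin M),
      conjAct U g ((Fintype.card G : ℂ)⁻¹ • ∑ h : G, kappa U h Φ m) =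
        (Fintype.card G : ℂ)⁻¹ • ∑ h : G, kappa U h Φ (g • m) :=
  averaged_povm_feasible_and_covariant_general U a b hcova hcovb Φ hΦ
end
end

section
/- Appendix claim (dual bound without the Born rule): let p : Fin M → (Matrix n n ℂ → ℝ) be a family of ℝ-linear functionals on Hermitian matrices such that p m A ≥ 0 whenever A is positive semidefinite, and ∑_{m<M} p m A = Re(Tr A) for every Hermitian A. Suppose ∑_{m<M} p m (a j m) ≤ b j for all j ∈ Fin J. Then for every λ : Fin J → ℝ with λ j ≥ 0 and every Hermitian X with X - z m λ positive semidefinite for all m, one has ∑_{m<M} p m (c m) ≤ Re(Tr X) + ∑_{j<J} λ j * b j. -/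
open Matrix Complex
open scoped ComplexOrder

noncomputable section

/-! Each `p m` is a positive functional, linear on Hermitian matrices, hence monotone for the
Loewner order. Dual feasibility says `c m ≤ X + ∑ j, λ j • a j m`, so
`p m (c m) ≤ p m X + ∑ j, λ j * p m (a j m)`; summing over `m`, the `p m X` add up to `Re (Tr X)`
and the remaining terms are bounded by `∑ j, λ j * b j` by the constraints and `λ ≥ 0`. -/

def IsLinearOn {E : Type*} [AddCommGroup E] [Module ℝ E] (S : Submodule ℝ E) (f : E → ℝ) :
    Prop :=
  ∀ (s t : ℝ) (A B : E), A ∈ S → B ∈ S → f (s • A + t • B) = s * f A + t * f B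

namespace IsLinearOn

variable {E : Type*} [AddCommGroup E] [Module ℝ E] {S : Submodule ℝ E} {f : E → ℝ}

lemma map_zero (hf : IsLinearOn S f) : f 0 = 0 := by
  simpa using hf 0 0 0 0 S.zero_mem S.zero_mem

lemma map_add (hf : IsLinearOn S f) {A B : E} (hA : A ∈ S) (hB : B ∈ S) :
    f (A + B) = f A + f B := by
  simpa using hf 1 1 A B hA hB

lemma map_sub (hf : IsLinearOn S f) {A B : E} (hA : A ∈ S) (hB : B ∈ S) :
    f (A - B) = f A - f B := by
  simpa [sub_eq_add_neg] using hf 1 (-1) A B hA hB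

lemma map_sum_smul (hf : IsLinearOn S f) {ι : Type*} (s : Finset ι) (w : ι → ℝ) (v : ι → E)
    (hv : ∀ i ∈ s, v i ∈ S) : f (∑ i ∈ s, w i • v i) = ∑ i ∈ s, w i * f (v i) := by
  classical
  induction s using Finset.induction_on with
  | empty => simpa using hf.map_zero
  | insert i s hi ih =>
    have hsum : ∑ k ∈ s, w k • v k ∈ S :=
      S.sum_mem fun k hk => S.smul_mem _ (hv k (Finset.mem_insert_of_mem hk))
    rw [Finset.sum_insert hi, Finset.sum_insert hi, ← one_smul ℝ (∑ k ∈ s, _),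
      hf _ _ _ _ (hv i (Finset.mem_insert_self i s)) hsum, one_mul,
      ih fun k hk => hv k (Finset.mem_insert_of_mem hk)]

lemma le_of_pos_sub {P : E → Prop} (hf : IsLinearOn S f) (hpos : ∀ A, P A → 0 ≤ f A)
    {A B : E} (hA : A ∈ S) (hB : B ∈ S) (hBA : P (B - A)) : f A ≤ f B := by
  have := hpos _ hBA
  rw [hf.map_sub hB hA] at this
  linarith

end IsLinearOn

lemma sub_zOp_eq {n : Type*} {M J : ℕ} (c : Fin M → Matrix n n ℂ)
    (a : Fin J → Fin M → Matrix n n ℂ) (lam : Fin J → ℝ) (X : Matrix n n ℂ) (m : Fin M) :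
    X - zOp c a lam m = X + ∑ j, lam j • a j m - c m := by
  simp only [zOp, Complex.coe_smul]
  abel

lemma apply_le_of_posSemidef_sub_zOp {n : Type*} [Fintype n] {M J : ℕ}
    {c : Fin M → Matrix n n ℂ} {a : Fin J → Fin M → Matrix n n ℂ} {lam : Fin J → ℝ}
    {X : Matrix n n ℂ} {m : Fin M} {f : Matrix n n ℂ → ℝ}
    (hf : IsLinearOn (selfAdjoint.submodule ℝ (Matrix n n ℂ)) f)
    (hpos : ∀ A : Matrix n n ℂ, A.PosSemidef → 0 ≤ f A)
    (hc : (c m).IsHermitian) (ha : ∀ j, (a j m).IsHermitian) (hX : X.IsHermitian)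
    (hXz : (X - zOp c a lam m).PosSemidef) :
    f (c m) ≤ f X + ∑ j, lam j * f (a j m) := by
  have hS : ∑ j, lam j • a j m ∈ selfAdjoint.submodule ℝ (Matrix n n ℂ) :=
    Submodule.sum_mem _ fun j _ => Submodule.smul_mem _ _ (ha j)
  rw [← hf.map_sum_smul _ _ _ fun j _ => ha j, ← hf.map_add hX hS]
  exact hf.le_of_pos_sub hpos hc (Submodule.add_mem _ hX hS) (sub_zOp_eq c a lam X m ▸ hXz)

theorem dual_bound_without_born_rule_general
    {n : Type*} [Fintype n]
    {M J : ℕ}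
    (c : Fin M → Matrix n n ℂ) (a : Fin J → Fin M → Matrix n n ℂ) (b : Fin J → ℝ)
    (hc : ∀ m, (c m).IsHermitian) (ha : ∀ j m, (a j m).IsHermitian)
    (p : Fin M → Matrix n n ℂ → ℝ)
    (hlin : ∀ (m : Fin M) (s t : ℝ) (A B : Matrix n n ℂ), A.IsHermitian → B.IsHermitian →
      p m (s • A + t • B) = s * p m A + t * p m B)
    (hpos : ∀ (m : Fin M) (A : Matrix n n ℂ), A.PosSemidef → 0 ≤ p m A)
    (hsum : ∀ A : Matrix n n ℂ, A.IsHermitian → ∑ m, p m A = A.trace.re)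
    (hfeas : ∀ j, ∑ m, p m (a j m) ≤ b j)
    (lam : Fin J → ℝ) (hlam : ∀ j, 0 ≤ lam j)
    (X : Matrix n n ℂ) (hX : X.IsHermitian)
    (hXz : ∀ m, (X - zOp c a lam m).PosSemidef) :
    ∑ m, p m (c m) ≤ X.trace.re + ∑ j, lam j * b j :=
  calc ∑ m, p m (c m) ≤ ∑ m, (p m X + ∑ j, lam j * p m (a j m)) :=
        Finset.sum_le_sum fun m _ => apply_le_of_posSemidef_sub_zOp (hlin m) (hpos m) (hc m)
          (fun j => ha j m) hX (hXz m)
    _ = X.trace.re + ∑ j, lam j * ∑ m, p m (a j m) := by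
        simp only [Finset.sum_add_distrib, hsum X hX, Finset.mul_sum]
        rw [Finset.sum_comm]
    _ ≤ X.trace.re + ∑ j, lam j * b j := by
        gcongr with j
        · exact hlam j
        · exact hfeas j

/-- Appendix claim: the dual value bounds the objective `∑ m, p m (c m)` for any family
of outcome functionals `p` that are ℝ-linear on Hermitian matrices, nonnegative on
positive semidefinite matrices, sum to the (real part of the) trace, and satisfy the
constraints, without invoking the Born rule. -/
theorem dual_bound_without_born_rule
    {n : Type*} [Fintype n] [DecidableEq n] [Nonempty n]
    {M J : ℕ}
    (c : Fin M → Matrix n n ℂ) (a : Fin J → Fin M → Matrix n n ℂ) (b : Fin J → ℝ)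
    (hc : ∀ m, (c m).IsHermitian) (ha : ∀ j m, (a j m).IsHermitian)
    (p : Fin M → Matrix n n ℂ → ℝ)
    (hlin : ∀ (m : Fin M) (s t : ℝ) (A B : Matrix n n ℂ), A.IsHermitian → B.IsHermitian →
      p m (s • A + t • B) = s * p m A + t * p m B)
    (hpos : ∀ (m : Fin M) (A : Matrix n n ℂ), A.PosSemidef → 0 ≤ p m A)
    (hsum : ∀ A : Matrix n n ℂ, A.IsHermitian → ∑ m, p m A = A.trace.re)
    (hfeas : ∀ j, ∑ m, p m (a j m) ≤ b j)
    (lam : Fin J → ℝ) (hlam : ∀ j, 0 ≤ lam j)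
    (X : Matrix n n ℂ) (hX : X.IsHermitian)
    (hXz : ∀ m, (X - zOp c a lam m).PosSemidef) :
    ∑ m, p m (c m) ≤ X.trace.re + ∑ j, lam j * b j :=
  dual_bound_without_born_rule_general c a b hc ha p hlin hpos hsum hfeas lam hlam X hX hXz
end
end
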